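/- The quotient ring ℂ[α,β,γ]/J_2, with J_2 = (α² + β − 8, α(β + 8) + γ, αγ), is a 6-dimensional ℂ-vector space. -/

import Mathlib

open MvPolynomial

noncomputable section

abbrev R3 : Type := MvPolynomial (Fin 3) ℂ

def al : R3 := X 0
def be : R3 := X 1
def ga : R3 := X 2

def J2 : Ideal R3 := Ideal.span {al ^ 2 + be - 8, al * (be + 8) + ga, al * ga}

/-! The first two generators of `J2` eliminate `β ≡ 8 - α²` and `γ ≡ α³ - 16α`, after which the
third becomes `αγ ≡ α⁴ - 16α²`. Hence `ℂ[α,β,γ]/J2 ≅ ℂ[α]/(α⁴ - 16α²)`, of dimension `4`. -/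

def quartic : Polynomial ℂ := Polynomial.X ^ 4 - 16 * Polynomial.X ^ 2

lemma natDegree_quartic : quartic.natDegree = 4 := by
  unfold quartic; compute_degree!

lemma aeval_quartic {A : Type*} [CommRing A] [Algebra ℂ A] (x : A) :
    Polynomial.aeval x quartic = x ^ 4 - 16 * x ^ 2 := by
  simp [quartic, map_ofNat]

local notation "q" => Ideal.Quotient.mk J2

lemma mk_J2_generators :
    q al ^ 2 + q be - 8 = 0 ∧ q al * (q be + 8) + q ga = 0 ∧ q al * q ga = 0 := by
  simp only [← map_ofNat q, ← map_pow, ← map_add, ← map_sub, ← map_mul,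
    Ideal.Quotient.eq_zero_iff_mem]
  refine ⟨?_, ?_, ?_⟩ <;> exact Ideal.subset_span (by simp)

lemma mk_be : q be = 8 - q al ^ 2 := by
  linear_combination mk_J2_generators.1

lemma mk_ga : q ga = q al ^ 3 - 16 * q al := by
  linear_combination mk_J2_generators.2.1 - q al * mk_J2_generators.1

lemma aeval_mk_al_quartic : Polynomial.aeval (q al) quartic = 0 := by
  rw [aeval_quartic]
  linear_combination mk_J2_generators.2.2 - q al * mk_ga

lemma root_quartic_pow_four :
    AdjoinRoot.root quartic ^ 4 = 16 * AdjoinRoot.root quartic ^ 2 := by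
  rw [← sub_eq_zero, ← aeval_quartic, AdjoinRoot.aeval_eq, AdjoinRoot.mk_self]

def toAdjoinRoot : R3 →ₐ[ℂ] AdjoinRoot quartic :=
  aeval ![AdjoinRoot.root quartic, 8 - AdjoinRoot.root quartic ^ 2,
    AdjoinRoot.root quartic ^ 3 - 16 * AdjoinRoot.root quartic]

lemma J2_le_ker_toAdjoinRoot : J2 ≤ RingHom.ker toAdjoinRoot := by
  simp only [J2, Ideal.span_le, Set.insert_subset_iff, Set.singleton_subset_iff, SetLike.mem_coe,
    RingHom.mem_ker]
  simp only [toAdjoinRoot, al, be, ga, map_sub, map_add, map_mul, map_pow, aeval_X,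
    Matrix.cons_val, map_ofNat, add_sub_cancel, sub_self, true_and]
  exact ⟨by ring, by linear_combination root_quartic_pow_four⟩

def ofAdjoinRoot : AdjoinRoot quartic →ₐ[ℂ] R3 ⧸ J2 :=
  AdjoinRoot.liftAlgHom quartic (Algebra.ofId ℂ _) (q al) aeval_mk_al_quartic

def quotientJ2ToAdjoinRoot : R3 ⧸ J2 →ₐ[ℂ] AdjoinRoot quartic :=
  Ideal.Quotient.liftₐ J2 toAdjoinRoot fun _ h => J2_le_ker_toAdjoinRoot h

lemma quotientJ2ToAdjoinRoot_mk (x : R3) : quotientJ2ToAdjoinRoot (q x) = toAdjoinRoot x := rfl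

lemma ofAdjoinRoot_root : ofAdjoinRoot (AdjoinRoot.root quartic) = q al :=
  AdjoinRoot.liftAlgHom_root _ _ _ _

lemma quotientJ2ToAdjoinRoot_comp_ofAdjoinRoot :
    quotientJ2ToAdjoinRoot.comp ofAdjoinRoot = AlgHom.id ℂ _ :=
  AdjoinRoot.algHom_ext <| by
    simp [quotientJ2ToAdjoinRoot_mk, ofAdjoinRoot_root, toAdjoinRoot, al]

lemma ofAdjoinRoot_comp_quotientJ2ToAdjoinRoot :
    ofAdjoinRoot.comp quotientJ2ToAdjoinRoot = AlgHom.id ℂ _ := by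
  refine Ideal.Quotient.algHom_ext _ (MvPolynomial.algHom_ext fun i => ?_)
  fin_cases i <;> simp [quotientJ2ToAdjoinRoot_mk, ofAdjoinRoot_root, toAdjoinRoot, map_ofNat, al]
  · exact mk_be.symm
  · exact mk_ga.symm

def quotientJ2EquivAdjoinRoot : (R3 ⧸ J2) ≃ₐ[ℂ] AdjoinRoot quartic :=
  AlgEquiv.ofAlgHom quotientJ2ToAdjoinRoot ofAdjoinRoot
    quotientJ2ToAdjoinRoot_comp_ofAdjoinRoot ofAdjoinRoot_comp_quotientJ2ToAdjoinRoot

theorem stmt10 : Module.finrank ℂ (R3 ⧸ J2) = 4 := by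
  rw [quotientJ2EquivAdjoinRoot.toLinearEquiv.finrank_eq, ← natDegree_quartic]
  exact finrank_quotient_span_eq_natDegree
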